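/- Every Barker sequence of even length n > 2 is a perfect binary sequence: all its nontrivial periodic autocorrelations are zero, and moreover n is divisible by 4. -/

import Mathlib

/-!
Each product `A k * A (k + u)` of two signs is `≡ A k + A (k + u) - 1 (mod 4)`, so summing over
both parts of a cyclic shift gives `R_u ≡ 2 ∑ A k - n ≡ n (mod 4)`. For a Barker sequence of even
length, `C_2` and `C_{n-2}` are even of absolute value at most one, hence zero, so `4 ∣ n`; then every
`R_u = C_u + C_{n-u}` is a multiple of four of absolute value at most two, hence zero.
-/

open Finset

def aperiodicAutocorr (A : ℕ → ℤ) (n u : ℕ) : ℤ :=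
  ∑ k ∈ range (n - u), A k * A (k + u)

def periodicAutocorr (A : ℕ → ℤ) (n u : ℕ) : ℤ :=
  aperiodicAutocorr A n u + aperiodicAutocorr A n (n - u)

lemma sum_modEq_card_of_sign {ι : Type*} (s : Finset ι) (f : ι → ℤ)
    (hf : ∀ i ∈ s, f i = 1 ∨ f i = -1) : ∑ i ∈ s, f i ≡ #s [ZMOD 2] := by
  have h : ∑ i ∈ s, f i ≡ ∑ _i ∈ s, 1 [ZMOD 2] :=
    Int.ModEq.sum fun i hi => by rcases hf i hi with h | h <;> rw [h]; decide
  simpa using h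

lemma mul_modEq_add_sub_one_of_sign {x y : ℤ} (hx : x = 1 ∨ x = -1) (hy : y = 1 ∨ y = -1) :
    x * y ≡ x + y - 1 [ZMOD 4] := by
  rcases hx with rfl | rfl <;> rcases hy with rfl | rfl <;> decide

section

variable {A : ℕ → ℤ} {n : ℕ}

lemma aperiodicAutocorr_modEq_two (hA : ∀ k < n, A k = 1 ∨ A k = -1) (u : ℕ) :
    aperiodicAutocorr A n u ≡ (n - u : ℕ) [ZMOD 2] := by
  have h := sum_modEq_card_of_sign (range (n - u)) (fun k => A k * A (k + u)) fun k hk => by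
    have hk := mem_range.1 hk
    rcases hA k (by omega) with h | h <;> rcases hA (k + u) (by omega) with h' | h' <;> simp [h, h']
  rwa [card_range] at h

lemma sum_mul_shift_add_sum_mul_shift_modEq_four {m u : ℕ}
    (hA : ∀ k < m + u, A k = 1 ∨ A k = -1) :
    ∑ k ∈ range m, A k * A (k + u) + ∑ k ∈ range u, A k * A (k + m) ≡ (m + u : ℕ) [ZMOD 4] := by
  have hS : ∑ k ∈ range (m + u), A k ≡ (m + u : ℕ) [ZMOD 2] := by
    simpa using sum_modEq_card_of_sign _ _ fun k hk => hA k (mem_range.1 hk)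
  have h₁ : ∑ k ∈ range m, A k * A (k + u) ≡ ∑ k ∈ range m, (A k + A (k + u) - 1) [ZMOD 4] :=
    Int.ModEq.sum fun k hk => by
      have hk := mem_range.1 hk
      exact mul_modEq_add_sub_one_of_sign (hA k (by omega)) (hA (k + u) (by omega))
  have h₂ : ∑ k ∈ range u, A k * A (k + m) ≡ ∑ k ∈ range u, (A k + A (k + m) - 1) [ZMOD 4] :=
    Int.ModEq.sum fun k hk => by
      have hk := mem_range.1 hk
      exact mul_modEq_add_sub_one_of_sign (hA k (by omega)) (hA (k + m) (by omega))
  have hsplit₁ : ∑ k ∈ range (m + u), A k = ∑ k ∈ range m, A k + ∑ k ∈ range u, A (k + m) := by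
    rw [sum_range_add]
    exact congrArg _ (sum_congr rfl fun k _ => by rw [add_comm])
  have hsplit₂ : ∑ k ∈ range (m + u), A k = ∑ k ∈ range u, A k + ∑ k ∈ range m, A (k + u) := by
    rw [add_comm m u, sum_range_add]
    exact congrArg _ (sum_congr rfl fun k _ => by rw [add_comm])
  calc _ ≡ ∑ k ∈ range m, (A k + A (k + u) - 1) + ∑ k ∈ range u, (A k + A (k + m) - 1) [ZMOD 4] :=
        h₁.add h₂
    _ = 2 * ∑ k ∈ range (m + u), A k - (m + u : ℕ) := by
        simp only [sum_sub_distrib, sum_add_distrib, sum_const, card_range, nsmul_eq_mul, mul_one]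
        push_cast
        linarith
    _ ≡ 2 * (m + u : ℕ) - (m + u : ℕ) [ZMOD 4] := (hS.mul_left' (c := 2)).sub_right _
    _ = (m + u : ℕ) := by ring

lemma periodicAutocorr_modEq_four (hA : ∀ k < n, A k = 1 ∨ A k = -1) {u : ℕ} (hu : u ≤ n) :
    periodicAutocorr A n u ≡ n [ZMOD 4] := by
  have h := sum_mul_shift_add_sum_mul_shift_modEq_four (m := n - u) (u := u) fun k hk => hA k (by omega)
  rw [Nat.sub_add_cancel hu] at h
  unfold periodicAutocorr aperiodicAutocorr
  rwa [Nat.sub_sub_self hu]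

end

theorem barker_even_length_perfect (n : ℕ) (heven : Even n) (hn : 2 < n) (A : ℕ → ℤ)
    (hA : ∀ k < n, A k = 1 ∨ A k = -1)
    (hbarker : ∀ u, 0 < u → u < n →
      |∑ k ∈ Finset.range (n - u), A k * A (k + u)| ≤ 1) :
    (∀ u, 0 < u → u < n →
      (∑ k ∈ Finset.range (n - u), A k * A (k + u)) +
        (∑ k ∈ Finset.range (n - (n - u)), A k * A (k + (n - u))) = 0) ∧
    4 ∣ n := by
  change ∀ u, 0 < u → u < n → |aperiodicAutocorr A n u| ≤ 1 at hbarker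
  change (∀ u, 0 < u → u < n → periodicAutocorr A n u = 0) ∧ 4 ∣ n
  have hzero : ∀ u, 0 < u → u < n → Even (n - u) → aperiodicAutocorr A n u = 0 := by
    intro u hu0 hun ⟨r, hr⟩
    have hpar := aperiodicAutocorr_modEq_two hA u
    have hbound := abs_le.1 (hbarker u hu0 hun)
    rw [Int.ModEq, hr] at hpar
    push_cast at hpar
    omega
  have h4 : 4 ∣ n := by
    have h := periodicAutocorr_modEq_four hA (u := 2) hn.le
    rw [periodicAutocorr, hzero 2 two_pos hn (by grind), hzero (n - 2) (by omega) (by omega)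
      (by grind), Int.ModEq] at h
    omega
  refine ⟨fun u hu0 hun => ?_, h4⟩
  have h := periodicAutocorr_modEq_four hA hun.le
  have hbound₁ := abs_le.1 (hbarker u hu0 hun)
  have hbound₂ := abs_le.1 (hbarker (n - u) (by omega) (by omega))
  rw [periodicAutocorr] at h ⊢
  rw [Int.ModEq] at h
  omega
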